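/- Suppose k ≥ τ·ln τ/(τ−1), 0 < r < 1/ln τ, and fix constants 0 < η₂ < η₃ < 1. Let β = −max_{s ∈ [η₂,η₃]} ( r·ln(1 + (p/(1−p))·s^k) − s ), which is strictly positive. Then for every ε ∈ (0, β) there exists N such that for all n ≥ N and all integers S with n·η₂ ≤ S ≤ n·η₃, Φ_n(S) ≤ exp( −(β − ε)·m ). -/

import Mathlib

open Filter Finset

/-- Domain size `d = n^α` of Model RB. -/
noncomputable def dRB (α : ℝ) (n : ℕ) : ℝ := (n : ℝ) ^ α

/-- `m = n · ln d`. -/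
noncomputable def mRB (α : ℝ) (n : ℕ) : ℝ := (n : ℝ) * Real.log (dRB α n)

/-- `f_n(s) = 1 + (p/(1-p)) (s^k - d^{-k})/(1 - d^{-k})`. -/
noncomputable def fRB (α p : ℝ) (k n : ℕ) (s : ℝ) : ℝ :=
  1 + (p / (1 - p)) * (s ^ k - dRB α n ^ (-(k : ℝ))) / (1 - dRB α n ^ (-(k : ℝ)))

/-- `B_n(S) = C(n,S) (1/d)^S (1-1/d)^{n-S}`. -/
noncomputable def BRB (α : ℝ) (n S : ℕ) : ℝ :=
  (n.choose S : ℝ) * (1 / dRB α n) ^ S * (1 - 1 / dRB α n) ^ (n - S)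

/-- `W_n(S) = f_n(S/n)^{r m}`. -/
noncomputable def WRB (α p r : ℝ) (k n S : ℕ) : ℝ :=
  fRB α p k n ((S : ℝ) / (n : ℝ)) ^ (r * mRB α n)

/-- `Φ_n(S) = B_n(S) W_n(S)`. -/
noncomputable def PhiRB (α p r : ℝ) (k n S : ℕ) : ℝ := BRB α n S * WRB α p r k n S

/-- `g(s) = -k(k-1)(1-s)s^{k-1}/2`. -/
noncomputable def gRB (k : ℕ) (s : ℝ) : ℝ :=
  -((k : ℝ) * ((k : ℝ) - 1)) * (1 - s) * s ^ (k - 1) / 2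

/-- `η₁(n) = 1/d + λ/(n^{1-(k-1)α} ln d)`. -/
noncomputable def eta1 (α lam : ℝ) (k n : ℕ) : ℝ :=
  1 / dRB α n + lam / ((n : ℝ) ^ (1 - ((k : ℝ) - 1) * α) * Real.log (dRB α n))

/-- First moment `E[X] = d^n (1-p)^{r m}`. -/
noncomputable def E1RB (α p r : ℝ) (n : ℕ) : ℝ := dRB α n ^ n * (1 - p) ^ (r * mRB α n)

/-- Second moment `E[X²]`. -/
noncomputable def E2RB (α p r : ℝ) (k n : ℕ) : ℝ :=
  ∑ S ∈ Finset.range (n + 1),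
    dRB α n ^ n * (n.choose S : ℝ) * (dRB α n - 1) ^ (n - S) *
      ((1 - p) * ((S.choose k : ℝ) / (n.choose k : ℝ)) +
        ((1 - p) ^ 2 - p * (1 - p) * dRB α n ^ (-(k : ℝ)) / (1 - dRB α n ^ (-(k : ℝ)))) *
          (1 - (S.choose k : ℝ) / (n.choose k : ℝ))) ^ (r * mRB α n)

/-!
Write `T = p/(1-p)`, so that `τ = 1 + T` and the hypothesis on `k` reads
`(1 + T) log (1 + T) ≤ k T`. This is what makes `s ↦ log (1 + T s^k)` lie below its chord
`s ↦ s log τ` on `[0, 1]`: in the variable `x = s^k`, the difference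
`log τ · x^(1/k) - log (1 + T x)` has a derivative with the sign of a convex function that is
`≤ 0` at `x = 1`, so it first increases and then decreases, and it is `≥ 0` at both ends. Hence
`r log (1 + T s^k) - s ≤ (r log τ - 1) η₂ < 0` on `[η₂, η₃]`, i.e. `β > 0`.

For the bound, `C(n,S) ≤ 2^n` and `(1 - 1/d)^(n-S) ≤ 1` give `B_n(S) ≤ 2^n d^(-S)`, and
`f_n(s) ≤ (1 + T s^k) / (1 - d^(-k))`. Measured in units of `m = n log d`, the exponent of
`Φ_n(S)` is then `r log (1 + T s^k) - s ≤ -β` plus `log 2 / log d - r log (1 - d^(-k)) → 0`.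
-/
open Set Real Topology

theorem min_le_of_hasDerivAt_mul_convexOn {f w D : ℝ → ℝ} {a b x : ℝ}
    (hf : ContinuousOn f (Icc a b)) (hf' : ∀ y ∈ Ioo a b, HasDerivAt f (w y * D y) y)
    (hw : ∀ y ∈ Ioo a b, 0 < w y) (hD : ConvexOn ℝ (Icc a b) D) (hDb : D b ≤ 0)
    (hx : x ∈ Icc a b) : min (f a) (f b) ≤ f x := by
  have hb : b ∈ Icc a b := right_mem_Icc.2 (hx.1.trans hx.2)
  rcases le_or_gt (D x) 0 with hDx | hDx
  · have hD_nonpos : ∀ y ∈ Icc x b, D y ≤ 0 := fun y hy =>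
      (hD.le_on_segment hx hb (by rwa [segment_eq_Icc hx.2])).trans (max_le hDx hDb)
    have hanti : AntitoneOn f (Icc x b) := by
      refine antitoneOn_of_hasDerivWithinAt_nonpos (f' := fun y => w y * D y) (convex_Icc x b)
        (hf.mono (Icc_subset_Icc_left hx.1)) (fun y hy => ?_) (fun y hy => ?_)
      · rw [interior_Icc] at hy ⊢
        exact (hf' y ⟨hx.1.trans_lt hy.1, hy.2⟩).hasDerivWithinAt
      · rw [interior_Icc] at hy
        exact mul_nonpos_of_nonneg_of_nonpos (hw y ⟨hx.1.trans_lt hy.1, hy.2⟩).le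
          (hD_nonpos y (Ioo_subset_Icc_self hy))
    exact (min_le_right _ _).trans (hanti ⟨le_rfl, hx.2⟩ ⟨hx.2, le_rfl⟩ hx.2)
  · -- `x` lies between any `y ≤ x` and `b`, where `D b ≤ 0 < D x`
    have hD_pos : ∀ y ∈ Icc a x, 0 < D y := fun y hy => by
      have := hD.le_on_segment ⟨hy.1, hy.2.trans hx.2⟩ hb
        (by rw [segment_eq_Icc (hy.2.trans hx.2)]; exact ⟨hy.2, hx.2⟩)
      rw [le_max_iff] at this
      rcases this with h | h <;> linarith
    have hmono : MonotoneOn f (Icc a x) := by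
      refine monotoneOn_of_hasDerivWithinAt_nonneg (f' := fun y => w y * D y) (convex_Icc a x)
        (hf.mono (Icc_subset_Icc_right hx.2)) (fun y hy => ?_) (fun y hy => ?_)
      · rw [interior_Icc] at hy ⊢
        exact (hf' y ⟨hy.1, hy.2.trans_le hx.2⟩).hasDerivWithinAt
      · rw [interior_Icc] at hy
        exact (mul_pos (hw y ⟨hy.1, hy.2.trans_le hx.2⟩)
          (hD_pos y (Ioo_subset_Icc_self hy))).le
    exact (min_le_left _ _).trans (hmono ⟨le_rfl, hx.1⟩ ⟨hx.1, le_rfl⟩ hx.1)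

theorem log_one_add_mul_le_mul_rpow_inv {T K : ℝ} (hT : 0 ≤ T) (hK : 1 ≤ K)
    (hTK : (1 + T) * log (1 + T) ≤ K * T) {x : ℝ} (hx : x ∈ Set.Icc 0 1) :
    log (1 + T * x) ≤ log (1 + T) * x ^ K⁻¹ := by
  have hK0 : 0 < K := one_pos.trans_le hK
  have hpos : ∀ y : ℝ, 0 ≤ y → 0 < 1 + T * y := fun y hy => by positivity
  have hc : 1 - K⁻¹ ∈ Set.Icc 0 1 :=
    ⟨sub_nonneg.2 (inv_le_one_of_one_le₀ hK), sub_le_self _ (inv_nonneg.2 hK0.le)⟩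
  have hf' : ∀ y ∈ Ioo (0 : ℝ) 1,
      HasDerivAt (fun y => log (1 + T) * y ^ K⁻¹ - log (1 + T * y))
        (y ^ (K⁻¹ - 1) / (1 + T * y) *
          (log (1 + T) / K * (1 + T * y) - T * y ^ (1 - K⁻¹))) y := by
    intro y hy
    have hlin : HasDerivAt (fun y : ℝ => 1 + T * y) T y := by
      simpa using ((hasDerivAt_id y).const_mul T).const_add 1
    refine (((hasDerivAt_rpow_const (p := K⁻¹) (Or.inl hy.1.ne')).const_mul
      (log (1 + T))).sub (hlin.log (hpos y hy.1.le).ne')).congr_deriv ?_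
    have hyc : y ^ (K⁻¹ - 1) * y ^ (1 - K⁻¹) = 1 := by
      rw [← rpow_add hy.1]; norm_num
    have hu := (hpos y hy.1.le).ne'
    generalize y ^ (K⁻¹ - 1) = A at hyc ⊢
    generalize y ^ (1 - K⁻¹) = C at hyc ⊢
    field_simp
    linear_combination T * K * hyc
  have hD : ConvexOn ℝ (Set.Icc 0 1)
      fun y => log (1 + T) / K * (1 + T * y) - T * y ^ (1 - K⁻¹) := by
    have hlin : ConvexOn ℝ (Set.Icc 0 1) fun y => log (1 + T) / K * (1 + T * y) :=
      ((LinearMap.mulLeft ℝ (log (1 + T) / K * T)).convexOn (convex_Icc 0 1)).add_const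
        (log (1 + T) / K) |>.congr
          fun y _ => by simp only [Pi.add_apply, LinearMap.mulLeft_apply]; ring
    exact hlin.sub (((concaveOn_rpow hc.1 hc.2).subset Icc_subset_Ici_self
      (convex_Icc 0 1)).smul hT)
  have hf : ContinuousOn (fun y => log (1 + T) * y ^ K⁻¹ - log (1 + T * y)) (Set.Icc 0 1) := by
    refine ContinuousOn.sub (by fun_prop (disch := positivity)) ?_
    exact ContinuousOn.log (by fun_prop) fun y hy => (hpos y hy.1).ne'
  have hD1 : log (1 + T) / K * (1 + T * 1) - T * (1 : ℝ) ^ (1 - K⁻¹) ≤ 0 := by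
    simp only [one_rpow, mul_one]
    rw [sub_nonpos, div_mul_eq_mul_div, div_le_iff₀ hK0]
    linarith
  have := min_le_of_hasDerivAt_mul_convexOn hf hf'
    (fun y hy => div_pos (rpow_pos_of_pos hy.1 _) (hpos y hy.1.le)) hD hD1 hx
  simp only [zero_rpow (inv_ne_zero hK0.ne'), one_rpow, mul_zero, add_zero, log_one, mul_one,
    sub_self, min_self] at this
  linarith

theorem log_one_add_mul_pow_le {T : ℝ} {k : ℕ} (hT : 0 ≤ T) (hk : 1 ≤ k)
    (hTk : (1 + T) * log (1 + T) ≤ k * T) {s : ℝ} (hs : s ∈ Set.Icc 0 1) :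
    log (1 + T * s ^ k) ≤ log (1 + T) * s := by
  have := log_one_add_mul_le_mul_rpow_inv hT (by exact_mod_cast hk) hTk
    ⟨pow_nonneg hs.1 k, pow_le_one₀ hs.1 hs.2⟩
  rwa [pow_rpow_inv_natCast hs.1 (by omega)] at this

theorem mul_log_one_add_mul_pow_sub_le {T r η s : ℝ} {k : ℕ} (hT : 0 ≤ T) (hk : 1 ≤ k)
    (hTk : (1 + T) * log (1 + T) ≤ k * T) (hr : 0 ≤ r) (hrT : r * log (1 + T) ≤ 1)
    (hη : 0 ≤ η) (hs : s ∈ Set.Icc η 1) :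
    r * log (1 + T * s ^ k) - s ≤ (r * log (1 + T) - 1) * η := by
  have := log_one_add_mul_pow_le hT hk hTk ⟨hη.trans hs.1, hs.2⟩
  nlinarith [hs.1]

section

variable {α p r : ℝ} {k n S : ℕ}

theorem one_lt_dRB (hα : 0 < α) (hn : 1 < n) : 1 < dRB α n :=
  one_lt_rpow (by exact_mod_cast hn) hα

theorem mRB_nonneg (hα : 0 ≤ α) : 0 ≤ mRB α n := by
  rcases n.eq_zero_or_pos with rfl | hn
  · simp [mRB]
  · exact mul_nonneg n.cast_nonneg (log_nonneg (one_le_rpow (by exact_mod_cast hn) hα))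

theorem tendsto_dRB_atTop (hα : 0 < α) : Tendsto (dRB α) atTop atTop :=
  (tendsto_rpow_atTop hα).comp tendsto_natCast_atTop_atTop

theorem tendsto_dRB_rpow_neg (hα : 0 < α) (hk : 0 < k) :
    Tendsto (fun n => dRB α n ^ (-(k : ℝ))) atTop (𝓝 0) :=
  (tendsto_rpow_neg_atTop (by exact_mod_cast hk)).comp (tendsto_dRB_atTop hα)

theorem tendsto_log_two_div_sub_mul_log (hα : 0 < α) (hk : 0 < k) :
    Tendsto (fun n => log 2 / log (dRB α n) - r * log (1 - dRB α n ^ (-(k : ℝ)))) atTop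
      (𝓝 0) := by
  have hlog : Tendsto (fun n => log (dRB α n)) atTop atTop :=
    tendsto_log_atTop.comp (tendsto_dRB_atTop hα)
  have hδ : Tendsto (fun n => log (1 - dRB α n ^ (-(k : ℝ)))) atTop (𝓝 0) := by
    have h1 : Tendsto (fun n => 1 - dRB α n ^ (-(k : ℝ))) atTop (𝓝 1) := by
      simpa using (tendsto_const_nhds (x := (1 : ℝ))).sub (tendsto_dRB_rpow_neg hα hk)
    simpa [Function.comp_def] using (continuousAt_log one_ne_zero).tendsto.comp h1
  simpa using (tendsto_const_nhds.div_atTop hlog).sub (hδ.const_mul r)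

theorem BRB_le_exp (hd : 1 < dRB α n) (hn : 0 < n) :
    BRB α n S ≤ exp (mRB α n * (log 2 / log (dRB α n) - S / n)) := by
  have hd0 : 0 < dRB α n := one_pos.trans hd
  have hchoose : (n.choose S : ℝ) ≤ 2 ^ n := by exact_mod_cast Nat.choose_le_two_pow n S
  have hexp : mRB α n * (log 2 / log (dRB α n) - S / n) = n * log 2 + S * -log (dRB α n) := by
    rw [mRB]
    field_simp [(log_pos hd).ne']
    ring
  rw [hexp, exp_add, exp_nat_mul, exp_nat_mul, exp_log two_pos, exp_neg, exp_log hd0, BRB,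
    one_div]
  calc (n.choose S : ℝ) * (dRB α n)⁻¹ ^ S * (1 - (dRB α n)⁻¹) ^ (n - S)
      ≤ 2 ^ n * (dRB α n)⁻¹ ^ S * 1 := by
        have h1d : 0 ≤ 1 - (dRB α n)⁻¹ := sub_nonneg.2 (inv_le_one_of_one_le₀ hd.le)
        gcongr
        exact pow_le_one₀ h1d (sub_le_self _ (by positivity))
    _ = _ := mul_one _

theorem one_le_fRB {s : ℝ} (hp0 : 0 ≤ p) (hp1 : p < 1) (hδ : dRB α n ^ (-(k : ℝ)) ≤ s ^ k)
    (hδ1 : dRB α n ^ (-(k : ℝ)) < 1) : 1 ≤ fRB α p k n s := by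
  have : 0 ≤ p / (1 - p) := div_nonneg hp0 (sub_nonneg.2 hp1.le)
  rw [fRB, le_add_iff_nonneg_right]
  exact div_nonneg (mul_nonneg this (sub_nonneg.2 hδ)) (sub_nonneg.2 hδ1.le)

theorem fRB_le {s : ℝ} (hp0 : 0 ≤ p) (hp1 : p < 1) (hδ1 : dRB α n ^ (-(k : ℝ)) < 1) :
    fRB α p k n s ≤ (1 + p / (1 - p) * s ^ k) / (1 - dRB α n ^ (-(k : ℝ))) := by
  have hT : 0 ≤ p / (1 - p) := div_nonneg hp0 (sub_nonneg.2 hp1.le)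
  have hδ0 : 0 ≤ dRB α n ^ (-(k : ℝ)) := rpow_nonneg (rpow_nonneg n.cast_nonneg α) _
  rw [fRB, le_div_iff₀ (sub_pos.2 hδ1), add_mul, div_mul_cancel₀ _ (sub_pos.2 hδ1).ne']
  nlinarith

theorem WRB_le_exp (hp0 : 0 ≤ p) (hp1 : p < 1) (hr : 0 ≤ r) (hm : 0 ≤ mRB α n)
    (hδ : dRB α n ^ (-(k : ℝ)) ≤ ((S : ℝ) / n) ^ k) (hδ1 : dRB α n ^ (-(k : ℝ)) < 1) :
    WRB α p r k n S ≤ exp (mRB α n * (r * (log (1 + p / (1 - p) * ((S : ℝ) / n) ^ k) -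
      log (1 - dRB α n ^ (-(k : ℝ)))))) := by
  have hT : 0 ≤ p / (1 - p) := div_nonneg hp0 (sub_nonneg.2 hp1.le)
  have hnum : 0 < 1 + p / (1 - p) * ((S : ℝ) / n) ^ k :=
    add_pos_of_pos_of_nonneg one_pos (mul_nonneg hT (by positivity))
  calc WRB α p r k n S
      ≤ ((1 + p / (1 - p) * ((S : ℝ) / n) ^ k) / (1 - dRB α n ^ (-(k : ℝ)))) ^
          (r * mRB α n) :=
        rpow_le_rpow (zero_le_one.trans (one_le_fRB hp0 hp1 hδ hδ1)) (fRB_le hp0 hp1 hδ1)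
          (mul_nonneg hr hm)
    _ = _ := by
        rw [rpow_def_of_pos (div_pos hnum (sub_pos.2 hδ1)), log_div hnum.ne' (sub_pos.2 hδ1).ne']
        ring_nf

theorem PhiRB_le_exp (hp0 : 0 ≤ p) (hp1 : p < 1) (hr : 0 ≤ r) (hd : 1 < dRB α n) (hn : 0 < n)
    (hδ : dRB α n ^ (-(k : ℝ)) ≤ ((S : ℝ) / n) ^ k) (hδ1 : dRB α n ^ (-(k : ℝ)) < 1) :
    PhiRB α p r k n S ≤ exp (mRB α n *
      ((log 2 / log (dRB α n) - r * log (1 - dRB α n ^ (-(k : ℝ)))) +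
        (r * log (1 + p / (1 - p) * ((S : ℝ) / n) ^ k) - S / n))) := by
  have hm : 0 ≤ mRB α n := mul_nonneg n.cast_nonneg (log_pos hd).le
  have hW : 0 ≤ WRB α p r k n S :=
    rpow_nonneg (zero_le_one.trans (one_le_fRB hp0 hp1 hδ hδ1)) _
  calc PhiRB α p r k n S
      ≤ exp (mRB α n * (log 2 / log (dRB α n) - S / n)) *
          exp (mRB α n * (r * (log (1 + p / (1 - p) * ((S : ℝ) / n) ^ k) -
            log (1 - dRB α n ^ (-(k : ℝ)))))) :=
        mul_le_mul (BRB_le_exp hd hn) (WRB_le_exp hp0 hp1 hr hm hδ hδ1) hW (exp_pos _).le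
    _ = _ := by rw [← exp_add]; ring_nf

theorem eventually_PhiRB_le_exp (hα : 0 < α) (hk : 0 < k) (hp0 : 0 ≤ p) (hp1 : p < 1)
    (hr : 0 ≤ r) {η ε : ℝ} (hη : 0 < η) (hε : 0 < ε) :
    ∀ᶠ n : ℕ in atTop, ∀ S : ℕ, n * η ≤ S → PhiRB α p r k n S ≤
      exp (mRB α n * (ε + (r * log (1 + p / (1 - p) * ((S : ℝ) / n) ^ k) - S / n))) := by
  filter_upwards [eventually_gt_atTop 1,
    (tendsto_dRB_rpow_neg hα hk).eventually_lt_const (pow_pos hη k),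
    (tendsto_log_two_div_sub_mul_log (r := r) hα hk).eventually_lt_const hε]
    with n hn hδ herr S hS
  have hn0 : (0 : ℝ) < n := by exact_mod_cast (by omega : 0 < n)
  have hd := one_lt_dRB hα hn
  have hδS : dRB α n ^ (-(k : ℝ)) ≤ ((S : ℝ) / n) ^ k :=
    hδ.le.trans (pow_le_pow_left₀ hη.le ((le_div_iff₀ hn0).2 (by linarith)) k)
  have hδ1 : dRB α n ^ (-(k : ℝ)) < 1 :=
    rpow_lt_one_of_one_lt_of_neg hd (neg_lt_zero.2 (by exact_mod_cast hk))
  have hm := mRB_nonneg (n := n) hα.le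
  refine (PhiRB_le_exp hp0 hp1 hr hd (by omega) hδS hδ1).trans ?_
  gcongr

end

/-- with k ≥ τ ln τ/(τ-1), 0 < r < 1/ln τ, 0 < η₂ < η₃ < 1 and
β = -max_{[η₂,η₃]}(r ln(1 + (p/(1-p))s^k) - s), one has β > 0 and for every ε ∈ (0,β)
there is N such that Φ_n(S) ≤ exp(-(β-ε)m) for all n ≥ N and nη₂ ≤ S ≤ nη₃. -/
theorem stmt11 (α p r τ η₂ η₃ β : ℝ) (k : ℕ) (hα : 0 < α) (hk : 2 ≤ k)
    (hp0 : 0 < p) (hp1 : p < 1) (hτ : τ = 1 / (1 - p))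
    (hkτ : (k : ℝ) ≥ τ * Real.log τ / (τ - 1))
    (hr0 : 0 < r) (hr : r < 1 / Real.log τ)
    (hη₂ : 0 < η₂) (hη₂₃ : η₂ < η₃) (hη₃ : η₃ < 1)
    (hβ : β = -sSup ((fun s : ℝ => r * Real.log (1 + (p / (1 - p)) * s ^ k) - s) ''
      Set.Icc η₂ η₃)) :
    0 < β ∧
      ∀ ε : ℝ, 0 < ε → ε < β → ∃ N : ℕ, ∀ n : ℕ, N ≤ n → ∀ S : ℕ,
        (n : ℝ) * η₂ ≤ (S : ℝ) → (S : ℝ) ≤ (n : ℝ) * η₃ →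
          PhiRB α p r k n S ≤ Real.exp (-(β - ε) * mRB α n) := by
  set T := p / (1 - p)
  have hT : 0 < T := div_pos hp0 (sub_pos.2 hp1)
  have hτT : τ = 1 + T := by rw [hτ, one_add_div (sub_pos.2 hp1).ne', sub_add_cancel]
  have hL : 0 < log (1 + T) := log_pos (by linarith)
  have hTk : (1 + T) * log (1 + T) ≤ k * T := by
    rwa [hτT, ge_iff_le, add_sub_cancel_left, div_le_iff₀ hT] at hkτ
  have hrT : r * log (1 + T) < 1 := by rwa [hτT, lt_div_iff₀ hL] at hr
  set F := fun s : ℝ => r * log (1 + T * s ^ k) - s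
  have hF : ∀ s ∈ Set.Icc η₂ η₃, F s ≤ (r * log (1 + T) - 1) * η₂ := fun s hs =>
    mul_log_one_add_mul_pow_sub_le hT.le (by omega) hTk hr0.le hrT.le hη₂.le
      ⟨hs.1, hs.2.trans hη₃.le⟩
  have hFβ : ∀ s ∈ Set.Icc η₂ η₃, F s ≤ -β := fun s hs => by
    rw [hβ, neg_neg]
    exact le_csSup ⟨_, Set.forall_mem_image.2 hF⟩ (Set.mem_image_of_mem F hs)
  have hβ_pos : 0 < β := by
    have := csSup_le ((Set.nonempty_Icc.2 hη₂₃.le).image F) (Set.forall_mem_image.2 hF)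
    rw [hβ]
    nlinarith
  refine ⟨hβ_pos, fun ε hε _ => ?_⟩
  obtain ⟨N, hN⟩ := eventually_atTop.1 <| (eventually_gt_atTop 0).and <|
    eventually_PhiRB_le_exp (k := k) hα (by omega) hp0.le hp1 hr0.le hη₂ hε
  refine ⟨N, fun n hn S hS₂ hS₃ => ((hN n hn).2 S hS₂).trans ?_⟩
  have hn0 : (0 : ℝ) < n := by exact_mod_cast (hN n hn).1
  have hs : (S : ℝ) / n ∈ Set.Icc η₂ η₃ :=
    ⟨(le_div_iff₀ hn0).2 (by linarith), (div_le_iff₀ hn0).2 (by linarith)⟩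
  have hm := mRB_nonneg (n := n) hα.le
  calc _ ≤ exp (mRB α n * (ε + -β)) := by gcongr; exact hFβ _ hs
    _ = exp (-(β - ε) * mRB α n) := by ring_nf
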